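/- arXiv:2604.05098 — 4 statements merged into one kernel-verified Lean document; each statement's English description precedes it below -/
import Mathlib

section
/- Let d ≥ 1 and L ≥ 1 be integers and write n_j = 2^j − 1. For l = 1,…,L let I_{l→L} = I_{n_{L−1}} ⋯ I_{n_l} (with I_{L→L} the identity on ℝ^{n_L}). Then for every family of vectors u_l ∈ ℝ^{n_l^d} (l = 1,…,L), ‖Σ_{l=1}^{L} 2^{−l(2−d)/2} · I_{l→L}^{⊗d} u_l‖₂ ≤ 2^{dL/2} · (Σ_{l=1}^{L} ‖u_l‖₂²)^{1/2}. Equivalently, the modified BPX preconditioner F^d_L, whose l-th column block is 2^{−l(2−d)/2} I_{l→L}^{⊗d}, has spectral norm at most 2^{dL/2} = (1/h)^{d/2}, where h = 2^{−L} is the mesh spacing at level L. -/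
/-!
The one-level interpolation matrix is entrywise nonnegative with row sums at most `1` and column
sums at most `2`. Hence the composed interpolation `I_{l→L}` has row sums at most `1` and column
sums at most `2^{L-l}`, and its `d`-th Kronecker power has row sums at most `1` and column sums at
most `2^{d(L-l)}`. The Schur test bounds the `ℓ²` operator norm of the latter by `2^{d(L-l)/2}`,
which the level weight turns into `2^{dL/2} · 2^{-l}`. The triangle inequality and Cauchy–Schwarz
over the levels finish the proof, because `∑_{l ≥ 1} 4^{-l} < 1`.
-/

open Finset

lemma sum_ite_le_of_subsingleton {α : Type*} [Fintype α] {P : α → Prop} [DecidablePred P]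
    {a : ℝ} (ha : 0 ≤ a) (hP : ∀ x y, P x → P y → x = y) :
    ∑ x, (if P x then a else 0) ≤ a := by
  rw [sum_ite, sum_const_zero, add_zero, sum_const, nsmul_eq_mul]
  have hcard : #(univ.filter P) ≤ 1 :=
    card_le_one.2 fun x hx y hy => hP x y (mem_filter.1 hx).2 (mem_filter.1 hy).2
  calc (#(univ.filter P) : ℝ) * a ≤ 1 * a := by gcongr; exact_mod_cast hcard
    _ = a := one_mul a

lemma sum_Icc_quarter_pow_le (L : ℕ) : ∑ l ∈ Icc 1 L, (1 / 4 : ℝ) ^ l ≤ 1 - (1 / 4) ^ L := by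
  induction L with
  | zero => simp
  | succ L ih =>
    rw [sum_Icc_succ_top (by omega), pow_succ]
    nlinarith [pow_nonneg (by norm_num : (0 : ℝ) ≤ 1 / 4) L]

lemma norm_toLp_two_eq_sqrt {ι : Type*} [Fintype ι] (v : ι → ℝ) :
    ‖WithLp.toLp 2 v‖ = √(∑ i, v i ^ 2) := by
  simp only [EuclideanSpace.norm_eq, Real.norm_eq_abs, sq_abs]

/-- Cauchy–Schwarz against the weights `2^{-l}`, whose squares sum to less than `1`. -/
lemma norm_sum_Icc_le_sqrt_sum_sq {E : Type*} [SeminormedAddCommGroup E] (L : ℕ) (w : ℕ → E)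
    (x : ℕ → ℝ) {c : ℝ} (hc : 0 ≤ c) (hw : ∀ l ∈ Icc 1 L, ‖w l‖ ≤ c * ((1 / 2) ^ l * x l)) :
    ‖∑ l ∈ Icc 1 L, w l‖ ≤ c * √(∑ l ∈ Icc 1 L, x l ^ 2) := by
  have hweights : √(∑ l ∈ Icc 1 L, ((1 / 2 : ℝ) ^ l) ^ 2) ≤ 1 := by
    have hsq : ∀ l : ℕ, ((1 / 2 : ℝ) ^ l) ^ 2 = (1 / 4) ^ l := fun l => by
      rw [← pow_mul, mul_comm, pow_mul]; norm_num
    rw [Real.sqrt_le_one]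
    simp_rw [hsq]
    linarith [sum_Icc_quarter_pow_le L, pow_nonneg (by norm_num : (0 : ℝ) ≤ 1 / 4) L]
  calc ‖∑ l ∈ Icc 1 L, w l‖ ≤ ∑ l ∈ Icc 1 L, c * ((1 / 2) ^ l * x l) :=
        (norm_sum_le _ _).trans (sum_le_sum hw)
    _ = c * ∑ l ∈ Icc 1 L, (1 / 2) ^ l * x l := by rw [mul_sum]
    _ ≤ c * (√(∑ l ∈ Icc 1 L, ((1 / 2 : ℝ) ^ l) ^ 2) * √(∑ l ∈ Icc 1 L, x l ^ 2)) := by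
        gcongr; exact Real.sum_mul_le_sqrt_mul_sqrt _ _ _
    _ ≤ c * √(∑ l ∈ Icc 1 L, x l ^ 2) := by
        gcongr; exact mul_le_of_le_one_left (Real.sqrt_nonneg _) hweights

namespace Matrix

variable {m n p : Type*} [Fintype m] [Fintype n] [Fintype p]

/-- The hypotheses of the Schur test. -/
structure SchurBounded (A : Matrix m n ℝ) (R C : ℝ) : Prop where
  nonneg : ∀ i j, 0 ≤ A i j
  sum_row_le : ∀ i, ∑ j, A i j ≤ R
  sum_col_le : ∀ j, ∑ i, A i j ≤ C

theorem schurBounded_one [DecidableEq n] : (1 : Matrix n n ℝ).SchurBounded 1 1 where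
  nonneg i j := by rw [one_apply]; split_ifs <;> norm_num
  sum_row_le i := by simp [one_apply]
  sum_col_le j := by simp [one_apply]

def kroneckerPow (A : Matrix m n ℝ) (ι : Type*) [Fintype ι] : Matrix (ι → m) (ι → n) ℝ :=
  of fun f g => ∏ t, A (f t) (g t)

namespace SchurBounded

variable {A : Matrix m n ℝ} {R C : ℝ}

theorem mul {B : Matrix n p ℝ} {R' C' : ℝ} (hA : A.SchurBounded R C) (hB : B.SchurBounded R' C')
    (hR' : 0 ≤ R') (hC : 0 ≤ C) : (A * B).SchurBounded (R * R') (C * C') where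
  nonneg i k := sum_nonneg fun j _ => mul_nonneg (hA.nonneg i j) (hB.nonneg j k)
  sum_row_le i := calc
    ∑ k, (A * B) i k = ∑ j, A i j * ∑ k, B j k := by
      simp_rw [mul_apply, mul_sum]; exact sum_comm
    _ ≤ ∑ j, A i j * R' :=
      sum_le_sum fun j _ => mul_le_mul_of_nonneg_left (hB.sum_row_le j) (hA.nonneg i j)
    _ = (∑ j, A i j) * R' := by rw [sum_mul]
    _ ≤ R * R' := mul_le_mul_of_nonneg_right (hA.sum_row_le i) hR'
  sum_col_le k := calc
    ∑ i, (A * B) i k = ∑ j, (∑ i, A i j) * B j k := by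
      simp_rw [mul_apply, sum_mul]; exact sum_comm
    _ ≤ ∑ j, C * B j k :=
      sum_le_sum fun j _ => mul_le_mul_of_nonneg_right (hA.sum_col_le j) (hB.nonneg j k)
    _ = C * ∑ j, B j k := by rw [mul_sum]
    _ ≤ C * C' := mul_le_mul_of_nonneg_left (hB.sum_col_le k) hC

theorem sum_mulVec_sq_le (hA : A.SchurBounded R C) (hR : 0 ≤ R) (v : n → ℝ) :
    ∑ i, (A *ᵥ v) i ^ 2 ≤ R * C * ∑ j, v j ^ 2 := by
  have hrow : ∀ i, (A *ᵥ v) i ^ 2 ≤ R * ∑ j, A i j * v j ^ 2 := fun i => calc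
    (A *ᵥ v) i ^ 2 ≤ (∑ j, A i j) * ∑ j, A i j * v j ^ 2 :=
      sum_sq_le_sum_mul_sum_of_sq_le_mul _ (fun j _ => hA.nonneg i j)
        (fun j _ => mul_nonneg (hA.nonneg i j) (sq_nonneg _)) (fun j _ => le_of_eq (by ring))
    _ ≤ R * ∑ j, A i j * v j ^ 2 := by
      gcongr
      · exact sum_nonneg fun j _ => mul_nonneg (hA.nonneg i j) (sq_nonneg _)
      · exact hA.sum_row_le i
  calc ∑ i, (A *ᵥ v) i ^ 2 ≤ ∑ i, R * ∑ j, A i j * v j ^ 2 := sum_le_sum fun i _ => hrow i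
    _ = R * ∑ j, (∑ i, A i j) * v j ^ 2 := by simp_rw [← mul_sum, sum_mul]; rw [sum_comm]
    _ ≤ R * ∑ j, C * v j ^ 2 := by gcongr with j; exact hA.sum_col_le j
    _ = R * C * ∑ j, v j ^ 2 := by rw [← mul_sum, mul_assoc]

theorem norm_toLp_mulVec_le (hA : A.SchurBounded R C) (hR : 0 ≤ R) (v : n → ℝ) :
    ‖WithLp.toLp 2 (A *ᵥ v)‖ ≤ √(R * C) * ‖WithLp.toLp 2 v‖ := by
  rw [norm_toLp_two_eq_sqrt, norm_toLp_two_eq_sqrt,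
    ← Real.sqrt_mul' _ (sum_nonneg fun j _ => sq_nonneg _)]
  exact Real.sqrt_le_sqrt (hA.sum_mulVec_sq_le hR v)

theorem kroneckerPow {ι : Type*} [Fintype ι] [DecidableEq ι] (hA : A.SchurBounded R C) :
    (Matrix.kroneckerPow A ι).SchurBounded (R ^ Fintype.card ι) (C ^ Fintype.card ι) where
  nonneg f g := prod_nonneg fun t _ => hA.nonneg _ _
  sum_row_le f := calc
    ∑ g, Matrix.kroneckerPow A ι f g = ∏ t, ∑ j, A (f t) j := (Fintype.prod_sum _).symm
    _ ≤ ∏ _t : ι, R := prod_le_prod (fun t _ => sum_nonneg fun j _ => hA.nonneg _ _)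
        fun t _ => hA.sum_row_le _
    _ = R ^ Fintype.card ι := by rw [prod_const, card_univ]
  sum_col_le g := calc
    ∑ f, Matrix.kroneckerPow A ι f g = ∏ t, ∑ i, A i (g t) :=
      (Fintype.prod_sum fun t i => A i (g t)).symm
    _ ≤ ∏ _t : ι, C := prod_le_prod (fun t _ => sum_nonneg fun i _ => hA.nonneg _ _)
        fun t _ => hA.sum_col_le _
    _ = C ^ Fintype.card ι := by rw [prod_const, card_univ]

theorem of_eq_mul_succ {k : Type*} [Fintype k] {n : ℕ → Type*} [∀ j, Fintype (n j)]
    {I : ∀ j, Matrix (n (j + 1)) (n j) ℝ} {J : ∀ j, Matrix k (n j) ℝ} {L : ℕ}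
    (hR : 0 ≤ R) (hC : 0 ≤ C) (hI : ∀ j, (I j).SchurBounded R C)
    (hJL : (J L).SchurBounded 1 1) (hJ : ∀ j < L, J j = J (j + 1) * I j) {j : ℕ} (hj : j ≤ L) :
    (J j).SchurBounded (R ^ (L - j)) (C ^ (L - j)) := by
  induction hj using Nat.decreasingInduction with
  | self => simpa using hJL
  | of_succ j hj ih =>
    have hexp : L - (j + 1) + 1 = L - j := by omega
    rw [hJ j hj, ← hexp, pow_succ, pow_succ]
    exact ih.mul (hI j) hR (pow_nonneg hC _)

end SchurBounded

/-- With 0-based indices the paper's `(I u)_{2x} = u_x` becomes row `2x+1`, column `x`. -/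
noncomputable def interpolation (m n : ℕ) : Matrix (Fin m) (Fin n) ℝ :=
  of fun r x => if r.val = 2 * x.val + 1 then 1
    else if r.val = 2 * x.val ∨ r.val = 2 * x.val + 2 then 1 / 2 else 0

theorem schurBounded_interpolation (m n : ℕ) : (interpolation m n).SchurBounded 1 2 where
  nonneg r x := by simp only [interpolation, of_apply]; split_ifs <;> norm_num
  sum_row_le r := by
    rcases Nat.even_or_odd r.val with ⟨k, hk⟩ | ⟨k, hk⟩
    · calc ∑ x, interpolation m n r x
          ≤ ∑ x : Fin n, ((if r.val = 2 * x.val then 1 / 2 else 0) +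
              (if r.val = 2 * x.val + 2 then 1 / 2 else 0)) := by
            refine sum_le_sum fun x _ => ?_
            simp only [interpolation, of_apply]
            split_ifs <;> first | (exfalso; omega) | norm_num
        _ ≤ 1 / 2 + 1 / 2 := by
            rw [sum_add_distrib]
            gcongr <;>
              exact sum_ite_le_of_subsingleton (by norm_num) fun x y _ _ => Fin.ext (by omega)
        _ = 1 := by norm_num
    · calc ∑ x, interpolation m n r x
          ≤ ∑ x : Fin n, if r.val = 2 * x.val + 1 then 1 else 0 := by
            refine sum_le_sum fun x _ => ?_
            simp only [interpolation, of_apply]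
            split_ifs <;> first | (exfalso; omega) | norm_num
        _ ≤ 1 := sum_ite_le_of_subsingleton zero_le_one fun x y _ _ => Fin.ext (by omega)
  sum_col_le x := calc
    ∑ r, interpolation m n r x
        ≤ ∑ r : Fin m, ((if r.val = 2 * x.val + 1 then 1 else 0) +
            ((if r.val = 2 * x.val then 1 / 2 else 0) +
              (if r.val = 2 * x.val + 2 then 1 / 2 else 0))) := by
          refine sum_le_sum fun r _ => ?_
          simp only [interpolation, of_apply]
          split_ifs <;> first | (exfalso; omega) | norm_num
    _ ≤ 1 + (1 / 2 + 1 / 2) := by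
          simp only [sum_add_distrib]
          gcongr <;>
            exact sum_ite_le_of_subsingleton (by norm_num) fun r s _ _ => Fin.ext (by omega)
    _ = 2 := by norm_num

end Matrix

theorem two_rpow_mul_sqrt_two_pow_eq (d : ℕ) {l L : ℕ} (hl : l ≤ L) :
    (2 : ℝ) ^ (-((l : ℝ) * (2 - (d : ℝ))) / 2) * √((2 ^ (L - l)) ^ d) =
      (2 : ℝ) ^ (((d : ℝ) * (L : ℝ)) / 2) * (1 / 2) ^ l := by
  rw [← pow_mul, Real.sqrt_eq_rpow, ← Real.rpow_natCast, ← Real.rpow_mul zero_le_two,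
    ← Real.rpow_add two_pos, one_div, inv_pow, ← Real.rpow_natCast, ← Real.rpow_neg zero_le_two,
    ← Real.rpow_add two_pos]
  congr 1
  push_cast [Nat.cast_sub hl]
  ring

theorem stmt12_general (L d : ℕ)
    (I : ∀ j : ℕ, Matrix (Fin (2 ^ (j + 1) - 1)) (Fin (2 ^ j - 1)) ℝ)
    (hI : ∀ (j : ℕ) (r : Fin (2 ^ (j + 1) - 1)) (x : Fin (2 ^ j - 1)),
      I j r x = if r.val = 2 * x.val + 1 then 1
        else if r.val = 2 * x.val ∨ r.val = 2 * x.val + 2 then (1 / 2 : ℝ) else 0)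
    (J : ∀ j : ℕ, Matrix (Fin (2 ^ L - 1)) (Fin (2 ^ j - 1)) ℝ)
    (hJL : J L = 1)
    (hJ : ∀ j, j < L → J j = J (j + 1) * I j)
    (K : ∀ j : ℕ, Matrix (Fin d → Fin (2 ^ L - 1)) (Fin d → Fin (2 ^ j - 1)) ℝ)
    (hK : ∀ (j : ℕ) (f : Fin d → Fin (2 ^ L - 1)) (g : Fin d → Fin (2 ^ j - 1)),
      K j f g = ∏ t, J j (f t) (g t))
    (u : ∀ j : ℕ, (Fin d → Fin (2 ^ j - 1)) → ℝ) :
    Real.sqrt (∑ f,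
        ((∑ l ∈ Finset.Icc 1 L,
          (2 : ℝ) ^ (-((l : ℝ) * (2 - (d : ℝ))) / 2) • (K l).mulVec (u l)) f) ^ 2) ≤
      (2 : ℝ) ^ (((d : ℝ) * (L : ℝ)) / 2) *
        Real.sqrt (∑ l ∈ Finset.Icc 1 L, ∑ g, (u l g) ^ 2) := by
  have hJbd (l : ℕ) (hl : l ≤ L) : (J l).SchurBounded 1 (2 ^ (L - l)) := by
    have hI' (j : ℕ) : (I j).SchurBounded 1 2 := by
      rw [show I j = Matrix.interpolation _ _ from Matrix.ext (hI j)]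
      exact Matrix.schurBounded_interpolation _ _
    simpa using Matrix.SchurBounded.of_eq_mul_succ (n := fun j => Fin (2 ^ j - 1)) zero_le_one
      zero_le_two hI' (hJL ▸ Matrix.schurBounded_one) hJ hl
  have hKbd (l : ℕ) (hl : l ≤ L) :
      ‖WithLp.toLp 2 ((K l).mulVec (u l))‖ ≤ √((2 ^ (L - l)) ^ d) * ‖WithLp.toLp 2 (u l)‖ := by
    rw [show K l = Matrix.kroneckerPow (J l) (Fin d) from Matrix.ext (hK l)]
    simpa using ((hJbd l hl).kroneckerPow (ι := Fin d)).norm_toLp_mulVec_le (by simp) (u l)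
  have hnorm_sq (l : ℕ) : ∑ g, u l g ^ 2 = ‖WithLp.toLp 2 (u l)‖ ^ 2 := by
    rw [norm_toLp_two_eq_sqrt, Real.sq_sqrt (sum_nonneg fun g _ => sq_nonneg _)]
  rw [← norm_toLp_two_eq_sqrt, WithLp.toLp_sum]
  simp_rw [hnorm_sq]
  refine norm_sum_Icc_le_sqrt_sum_sq L _ _ (by positivity) fun l hl => ?_
  rw [WithLp.toLp_smul, norm_smul, Real.norm_of_nonneg (by positivity), ← mul_assoc,
    ← two_rpow_mul_sqrt_two_pow_eq d (mem_Icc.1 hl).2, mul_assoc]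
  exact mul_le_mul_of_nonneg_left (hKbd l (mem_Icc.1 hl).2) (by positivity)

/-- **Spectral norm of the modified BPX preconditioner.** With `n_j = 2^j − 1`,
`I j` the one-level 1D interpolation matrix, `J j = I (L−1) ⋯ I j` the composed
interpolation from level `j` to level `L` (with `J L` the identity), and
`K l` the `d`-fold Kronecker power of `J l` (as a matrix on functions
`Fin d → Fin n_L`), the modified BPX preconditioner `F^d_L`, whose `l`-th column
block is `2^{−l(2−d)/2}·(J l)^{⊗d}`, has spectral norm at most `2^{dL/2}`:
for every family of vectors `u l ∈ ℝ^{n_l^d}` (`l = 1,…,L`),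
`‖Σ_{l=1}^L 2^{−l(2−d)/2} (K l) (u l)‖₂ ≤ 2^{dL/2}·(Σ_{l=1}^L ‖u l‖₂²)^{1/2}`. -/
theorem stmt12 (L d : ℕ) (hL : 1 ≤ L) (hd : 1 ≤ d)
    (I : ∀ j : ℕ, Matrix (Fin (2 ^ (j + 1) - 1)) (Fin (2 ^ j - 1)) ℝ)
    (hI : ∀ (j : ℕ) (r : Fin (2 ^ (j + 1) - 1)) (x : Fin (2 ^ j - 1)),
      I j r x = if r.val = 2 * x.val + 1 then 1
        else if r.val = 2 * x.val ∨ r.val = 2 * x.val + 2 then (1 / 2 : ℝ) else 0)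
    (J : ∀ j : ℕ, Matrix (Fin (2 ^ L - 1)) (Fin (2 ^ j - 1)) ℝ)
    (hJL : J L = 1)
    (hJ : ∀ j, j < L → J j = J (j + 1) * I j)
    (K : ∀ j : ℕ, Matrix (Fin d → Fin (2 ^ L - 1)) (Fin d → Fin (2 ^ j - 1)) ℝ)
    (hK : ∀ (j : ℕ) (f : Fin d → Fin (2 ^ L - 1)) (g : Fin d → Fin (2 ^ j - 1)),
      K j f g = ∏ t, J j (f t) (g t))
    (u : ∀ j : ℕ, (Fin d → Fin (2 ^ j - 1)) → ℝ) :
    Real.sqrt (∑ f,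
        ((∑ l ∈ Finset.Icc 1 L,
          (2 : ℝ) ^ (-((l : ℝ) * (2 - (d : ℝ))) / 2) • (K l).mulVec (u l)) f) ^ 2) ≤
      (2 : ℝ) ^ (((d : ℝ) * (L : ℝ)) / 2) *
        Real.sqrt (∑ l ∈ Finset.Icc 1 L, ∑ g, (u l g) ^ 2) :=
  stmt12_general L d I hI J hJL hJ K hK u
end

section
/- Let L ∈ ℝ^{n×n} be symmetric positive definite, let F ∈ ℝ^{n×N} have full row rank (rank F = n), and let G ∈ ℝ^{N×N} be a Moore–Penrose pseudoinverse of FᵀLF. Then F G Fᵀ = L⁻¹. -/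
open Matrix

/-- **Fast inversion via the preconditioner.** If `L` is symmetric positive definite,
`F` has full row rank, and `G` is a Moore–Penrose pseudoinverse of `FᵀLF` (i.e.
`XGX = X`, `GXG = G`, and `XG`, `GX` are symmetric for `X = FᵀLF`), then
`F G Fᵀ = L⁻¹`. -/
theorem stmt13 (n N : ℕ)
    (L : Matrix (Fin n) (Fin n) ℝ) (hL : L.PosDef)
    (F : Matrix (Fin n) (Fin N) ℝ) (hF : F.rank = n)
    (G : Matrix (Fin N) (Fin N) ℝ)
    (h1 : (Fᵀ * L * F) * G * (Fᵀ * L * F) = Fᵀ * L * F)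
    (h2 : G * (Fᵀ * L * F) * G = G)
    (h3 : ((Fᵀ * L * F) * G)ᵀ = (Fᵀ * L * F) * G)
    (h4 : (G * (Fᵀ * L * F))ᵀ = G * (Fᵀ * L * F)) :
    F * G * Fᵀ = L⁻¹ := by
  -- F has a right inverse B with F * B = 1
  have hrange : LinearMap.range F.mulVecLin = ⊤ := by
    apply Submodule.eq_top_of_finrank_eq
    rw [show Module.finrank ℝ (LinearMap.range F.mulVecLin) = F.rank from rfl, hF]
    simp
  obtain ⟨g, hg⟩ := LinearMap.exists_rightInverse_of_surjective F.mulVecLin hrange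
  set B := LinearMap.toMatrix' g with hB
  have hBg : B.mulVecLin = g := by
    rw [← Matrix.toLin'_apply', hB, Matrix.toLin'_toMatrix']
  have hFB : F * B = 1 := by
    have : (F * B).mulVecLin = (1 : Matrix (Fin n) (Fin n) ℝ).mulVecLin := by
      rw [Matrix.mulVecLin_mul, hBg, Matrix.mulVecLin_one]; exact hg
    have inj : Function.Injective
        (Matrix.mulVecLin : Matrix (Fin n) (Fin n) ℝ → _) := fun X Y h => by
      rw [← Matrix.toLin'_apply', ← Matrix.toLin'_apply'] at h
      exact Matrix.toLin'.injective h
    exact inj this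
  -- multiply h1 by Bᵀ on the left and B on the right
  have key : L * (F * G * Fᵀ) * L = L := by
    have := congrArg (fun X => Bᵀ * X * B) h1
    simp only [Matrix.mul_assoc] at this ⊢
    have hBtFt : Bᵀ * Fᵀ = 1 := by rw [← Matrix.transpose_mul, hFB, Matrix.transpose_one]
    calc L * (F * (G * (Fᵀ * L))) = Bᵀ * (Fᵀ * (L * (F * (G * (Fᵀ * (L * (F * B))))))) := by
          rw [hFB, Matrix.mul_one, ← Matrix.mul_assoc Bᵀ Fᵀ, hBtFt, Matrix.one_mul]
      _ = Bᵀ * (Fᵀ * (L * (F * B))) := this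
      _ = L := by rw [hFB, Matrix.mul_one, ← Matrix.mul_assoc Bᵀ Fᵀ, hBtFt, Matrix.one_mul]
  -- conclude using invertibility of L
  have hLu : IsUnit L.det := isUnit_iff_isUnit_det L |>.mp hL.isUnit
  have hLM : L * (F * G * Fᵀ) = 1 := by
    have := congrArg (fun X => X * L⁻¹) key
    simpa [Matrix.mul_assoc, Matrix.mul_nonsing_inv L hLu] using this
  exact (Matrix.inv_eq_right_inv hLM).symm
end

section
/- Let A ∈ ℂ^{m_a×n_a}, B ∈ ℂ^{m_b×n_b}, and let M_a ≥ m_a, N_a ≥ n_a, M_b ≥ m_b, N_b ≥ n_b be integers. Set A' = emb_{M_a,N_a}(A), B' = emb_{M_b,N_b}(B), and (A⊗B)' = emb_{M_a·M_b, N_a·N_b}(A⊗B). Then there exist permutation matrices P_r of size M_a·M_b and P_c of size N_a·N_b such that (A⊗B)' = P_r · (A' ⊗ B') · P_c. -/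
open Matrix

/-- Top-left zero embedding of an `m × n` matrix into an `M × N` matrix (`0`-indexed):
entries `X_{jk}` for `j < m`, `k < n`, and `0` otherwise. -/
def embMat {m n : ℕ} (M N : ℕ) (X : Matrix (Fin m) (Fin n) ℂ) : Matrix (Fin M) (Fin N) ℂ :=
  Matrix.of fun j k =>
    if hj : j.val < m then
      if hk : k.val < n then X ⟨j.val, hj⟩ ⟨k.val, hk⟩ else 0
    else 0

/-- Kronecker product of matrices with `Fin` index types, flattened via
`(j₁, j₂) ↦ j₁·m₂ + j₂` (i.e. `finProdFinEquiv`), so that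
`(X ⊗ Y)_{(j₁ m₂ + j₂),(k₁ n₂ + k₂)} = X_{j₁ k₁} · Y_{j₂ k₂}`. -/
def kronFin {m₁ n₁ m₂ n₂ : ℕ} (X : Matrix (Fin m₁) (Fin n₁) ℂ)
    (Y : Matrix (Fin m₂) (Fin n₂) ℂ) : Matrix (Fin (m₁ * m₂)) (Fin (n₁ * n₂)) ℂ :=
  Matrix.reindex finProdFinEquiv finProdFinEquiv (Matrix.kroneckerMap (· * ·) X Y)

def auxE {a b Aa Bb : ℕ} (ha : a ≤ Aa) (hb : b ≤ Bb) :
    {i : Fin (Aa * Bb) // i.val < a * b} ≃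
    {i : Fin (Aa * Bb) //
      (finProdFinEquiv.symm i).1.val < a ∧ (finProdFinEquiv.symm i).2.val < b} where
  toFun x :=
    ⟨finProdFinEquiv
      (Fin.castLE ha (finProdFinEquiv.symm (⟨x.1.val, x.2⟩ : Fin (a*b))).1,
       Fin.castLE hb (finProdFinEquiv.symm (⟨x.1.val, x.2⟩ : Fin (a*b))).2),
     by
      simp only [Equiv.symm_apply_apply, Fin.coe_castLE]
      exact ⟨Fin.isLt _, Fin.isLt _⟩⟩
  invFun y :=
    ⟨⟨(finProdFinEquiv
        ((⟨(finProdFinEquiv.symm y.1).1.val, y.2.1⟩ : Fin a),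
         (⟨(finProdFinEquiv.symm y.1).2.val, y.2.2⟩ : Fin b))).val,
      lt_of_lt_of_le (finProdFinEquiv _).isLt (Nat.mul_le_mul ha hb)⟩,
     (finProdFinEquiv _).isLt⟩
  left_inv := by
    rintro ⟨x, hx⟩
    ext
    simp only [Equiv.symm_apply_apply, Fin.coe_castLE, Fin.eta, Prod.mk.eta,
      Equiv.apply_symm_apply]
  right_inv := by
    rintro ⟨y, hy⟩
    ext
    simp only [Fin.eta, Equiv.symm_apply_apply, Fin.castLE_mk, Prod.mk.eta,
      Equiv.apply_symm_apply]

noncomputable def auxPerm {a b Aa Bb : ℕ} (ha : a ≤ Aa) (hb : b ≤ Bb) :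
    Equiv.Perm (Fin (Aa * Bb)) :=
  (auxE ha hb).extendSubtype

lemma auxPerm_mem {a b Aa Bb : ℕ} (ha : a ≤ Aa) (hb : b ≤ Bb)
    (i : Fin (Aa * Bb)) (hi : i.val < a * b) :
    auxPerm ha hb i = finProdFinEquiv
      (Fin.castLE ha (finProdFinEquiv.symm (⟨i.val, hi⟩ : Fin (a*b))).1,
       Fin.castLE hb (finProdFinEquiv.symm (⟨i.val, hi⟩ : Fin (a*b))).2) := by
  rw [auxPerm, Equiv.extendSubtype_apply_of_mem (auxE ha hb) i hi]
  rfl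

lemma auxPerm_notMem {a b Aa Bb : ℕ} (ha : a ≤ Aa) (hb : b ≤ Bb)
    (i : Fin (Aa * Bb)) (hi : ¬ i.val < a * b) :
    ¬((finProdFinEquiv.symm (auxPerm ha hb i)).1.val < a ∧
      (finProdFinEquiv.symm (auxPerm ha hb i)).2.val < b) :=
  Equiv.extendSubtype_not_mem (auxE ha hb) i hi


lemma embMat_apply_lt {m n : ℕ} (M N : ℕ) (X : Matrix (Fin m) (Fin n) ℂ)
    (r : Fin M) (c : Fin N) (hr : r.val < m) (hc : c.val < n) :
    embMat M N X r c = X ⟨r.val, hr⟩ ⟨c.val, hc⟩ := by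
  simp [embMat, hr, hc]

lemma embMat_row_zero {m n : ℕ} (M N : ℕ) (X : Matrix (Fin m) (Fin n) ℂ)
    (r : Fin M) (c : Fin N) (hr : ¬ r.val < m) :
    embMat M N X r c = 0 := by
  simp [embMat, hr]

lemma embMat_col_zero {m n : ℕ} (M N : ℕ) (X : Matrix (Fin m) (Fin n) ℂ)
    (r : Fin M) (c : Fin N) (hc : ¬ c.val < n) :
    embMat M N X r c = 0 := by
  simp [embMat, hc]

lemma embMat_castLE {m n M N : ℕ} (hm : m ≤ M) (hn : n ≤ N)
    (X : Matrix (Fin m) (Fin n) ℂ) (r : Fin m) (c : Fin n) :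
    embMat M N X (Fin.castLE hm r) (Fin.castLE hn c) = X r c := by
  simp [embMat]

lemma kronFin_apply {m₁ n₁ m₂ n₂ : ℕ} (X : Matrix (Fin m₁) (Fin n₁) ℂ)
    (Y : Matrix (Fin m₂) (Fin n₂) ℂ) (r : Fin (m₁ * m₂)) (c : Fin (n₁ * n₂)) :
    kronFin X Y r c =
      X (finProdFinEquiv.symm r).1 (finProdFinEquiv.symm c).1 *
      Y (finProdFinEquiv.symm r).2 (finProdFinEquiv.symm c).2 := rfl


/-- **Zero embeddings commute with Kronecker products up to permutations.**
For `A ∈ ℂ^{m_a×n_a}`, `B ∈ ℂ^{m_b×n_b}` and sizes `M_a ≥ m_a`, `N_a ≥ n_a`,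
`M_b ≥ m_b`, `N_b ≥ n_b`, setting `A' = emb A`, `B' = emb B` and
`(A⊗B)' = emb (A⊗B)`, there exist permutation matrices `P_r` of size `M_a·M_b` and
`P_c` of size `N_a·N_b` with `(A⊗B)' = P_r · (A' ⊗ B') · P_c`. -/
theorem stmt14 (ma na mb nb Ma Na Mb Nb : ℕ)
    (hma : ma ≤ Ma) (hna : na ≤ Na) (hmb : mb ≤ Mb) (hnb : nb ≤ Nb)
    (A : Matrix (Fin ma) (Fin na) ℂ) (B : Matrix (Fin mb) (Fin nb) ℂ) :
    ∃ (σr : Equiv.Perm (Fin (Ma * Mb))) (σc : Equiv.Perm (Fin (Na * Nb))),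
      embMat (Ma * Mb) (Na * Nb) (kronFin A B) =
        σr.permMatrix ℂ * kronFin (embMat Ma Na A) (embMat Mb Nb B) * σc.permMatrix ℂ := by
  classical
  refine ⟨auxPerm hma hmb, (auxPerm hna hnb).symm, ?_⟩
  rw [Equiv.Perm.permMatrix, Equiv.Perm.permMatrix, PEquiv.mul_toMatrix_toPEquiv,
    PEquiv.toMatrix_toPEquiv_mul, Equiv.symm_symm]
  ext i j
  simp only [submatrix_apply, id_eq]
  rw [kronFin_apply]
  by_cases hi : i.val < ma * mb
  · by_cases hj : j.val < na * nb
    · rw [embMat_apply_lt _ _ _ _ _ hi hj, auxPerm_mem hma hmb i hi,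
        auxPerm_mem hna hnb j hj, kronFin_apply]
      simp only [Equiv.symm_apply_apply]
      rw [embMat_castLE hma hna, embMat_castLE hmb hnb]
    · rw [embMat_col_zero _ _ _ _ _ hj]
      have hc := auxPerm_notMem hna hnb j hj
      push_neg at hc
      by_cases h1 : (finProdFinEquiv.symm ((auxPerm hna hnb) j)).1.val < na
      · rw [embMat_col_zero _ _ B _ _ (Nat.not_lt.mpr (hc h1)), mul_zero]
      · rw [embMat_col_zero _ _ A _ _ h1, zero_mul]
  · rw [embMat_row_zero _ _ _ _ _ hi]
    have hc := auxPerm_notMem hma hmb i hi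
    push_neg at hc
    by_cases h1 : (finProdFinEquiv.symm ((auxPerm hma hmb) i)).1.val < ma
    · rw [embMat_row_zero _ _ B _ _ (Nat.not_lt.mpr (hc h1)), mul_zero]
    · rw [embMat_row_zero _ _ A _ _ h1, zero_mul]
end

section
/- Suppose P is a unitary on H such that for every k with 0 ≤ k < N_c, P(e_0 ⊗ e_0 ⊗ e_k ⊗ e_0 ⊗ e_0) = (Σ_{j<N_r} sgn(A_{jk})·√(|A_{jk}|/c_max) · e_j ⊗ e_0 + √(1 − c_k/c_max) · e_0 ⊗ e_1) ⊗ e_k ⊗ e_0 ⊗ e_0, and for every k with N_c ≤ k < m, P(e_0 ⊗ e_0 ⊗ e_k ⊗ e_0 ⊗ e_0) = e_0 ⊗ e_0 ⊗ e_k ⊗ e_0 ⊗ e_1; and suppose Q is a unitary on H such that for every j with 0 ≤ j < N_r, Q(e_j ⊗ e_0 ⊗ e_0 ⊗ e_0 ⊗ e_0) = e_j ⊗ e_0 ⊗ (Σ_{k<N_c} √(|A_{jk}|/r_max) · e_k ⊗ e_0 + √(1 − r_j/r_max) · e_0 ⊗ e_1) ⊗ e_0, and for every j with N_r ≤ j <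 m, Q(e_j ⊗ e_0 ⊗ e_0 ⊗ e_0 ⊗ e_0) = e_j ⊗ e_0 ⊗ e_0 ⊗ e_0 ⊗ e_1. Then the unitary U = SWAP_{r,c} ∘ Q† ∘ P satisfies, for all j, k ∈ {0,…,m−1}, ⟨e_0 ⊗ e_0 ⊗ e_j ⊗ e_0 ⊗ e_0, U(e_0 ⊗ e_0 ⊗ e_k ⊗ e_0 ⊗ e_0)⟩ = A'_{jk}/√(r_max·c_max); that is, U is a (√(r_max·c_max), q+b+2, 0)-block encoding of A'. -/
open scoped InnerProductSpace

/-- The standard basis vector `e_i` of `EuclideanSpace ℂ ι`. -/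
noncomputable def ket {ι : Type*} [DecidableEq ι] (i : ι) : EuclideanSpace ℂ ι :=
  EuclideanSpace.single i 1

/-!
Moving `Q†` across the inner product and undoing the swap, the matrix element equals
`⟨Q |j,0,0,0,0⟩, P |0,0,k,0,0⟩⟩`. When `j < N_r` and `k < N_c` the only basis vector shared by
the two states is `|j,0,k,0,0⟩`, whose amplitudes multiply to
`√(|A_jk|/r_max) · sgn(A_jk) √(|A_jk|/c_max) = A_jk / √(r_max c_max)`. Otherwise the supports
are disjoint: an out-of-range row or column index, or a slack qubit, separates them.
-/

lemma inner_ket_left {ι : Type*} [DecidableEq ι] [Fintype ι] (i : ι)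
    (v : EuclideanSpace ℂ ι) : ⟪ket i, v⟫_ℂ = v i := by
  simp [ket, EuclideanSpace.inner_single_left]

lemma inner_ket_ket {ι : Type*} [DecidableEq ι] [Fintype ι] (i i' : ι) :
    ⟪ket i, ket i'⟫_ℂ = if i = i' then 1 else 0 := by
  rw [inner_ket_left]
  simp [ket, PiLp.single_apply]

lemma inner_ket_swap_symm {ι σ τ α : Type*} [Fintype ι] [DecidableEq ι] [Fintype σ]
    [DecidableEq σ] [Fintype τ] [DecidableEq τ] [Fintype α] [DecidableEq α]
    {S : EuclideanSpace ℂ (ι × σ × ι × τ × α) → EuclideanSpace ℂ (ι × σ × ι × τ × α)}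
    (hS : ∀ x j k s t a, S x (j, s, k, t, a) = x (k, s, j, t, a))
    (Q : EuclideanSpace ℂ (ι × σ × ι × τ × α) ≃ₗᵢ[ℂ] EuclideanSpace ℂ (ι × σ × ι × τ × α))
    (v : EuclideanSpace ℂ (ι × σ × ι × τ × α)) (i j : ι) (s : σ) (t : τ) (a : α) :
    ⟪ket (i, s, j, t, a), S (Q.symm v)⟫_ℂ = ⟪Q (ket (j, s, i, t, a)), v⟫_ℂ := by
  rw [inner_ket_left, hS, ← inner_ket_left, ← Q.inner_map_map, Q.apply_symm_apply]

lemma ofReal_sqrt_mul_sgn_mul_sqrt (z : ℂ) {r c : ℝ} (hr : 0 < r) (hc : 0 < c) :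
    ((√(‖z‖ / r) : ℝ) : ℂ) * (z / (‖z‖ : ℂ) * ((√(‖z‖ / c) : ℝ) : ℂ)) = z / ((√(r * c) : ℝ) : ℂ) := by
  rcases eq_or_ne z 0 with rfl | hz
  · simp
  have hsqrt : √(‖z‖ / r) * √(‖z‖ / c) = ‖z‖ / √(r * c) := by
    rw [← Real.sqrt_mul (by positivity), div_mul_div_comm, ← sq, Real.sqrt_div' _ (by positivity),
      Real.sqrt_sq (norm_nonneg z)]
  have hz' : (‖z‖ : ℂ) ≠ 0 := by exact_mod_cast norm_ne_zero_iff.2 hz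
  calc ((√(‖z‖ / r) : ℝ) : ℂ) * (z / (‖z‖ : ℂ) * ((√(‖z‖ / c) : ℝ) : ℂ))
      = z / ‖z‖ * ((√(‖z‖ / r) * √(‖z‖ / c) : ℝ) : ℂ) := by push_cast; ring
    _ = z / ((√(r * c) : ℝ) : ℂ) := by
      rw [hsqrt]; push_cast; field_simp

section OracleStates

variable {m pa Nr Nc : ℕ} [NeZero m] [NeZero pa] (hNrm : Nr ≤ m) (hNcm : Nc ≤ m)

/-- The shape of `Q |j, 0, 0, 0, 0⟩`, with amplitudes `a` and slack amplitude `s`. -/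
noncomputable def rowState (a : Fin Nc → ℂ) (s : ℂ) (j : Fin Nr) :
    EuclideanSpace ℂ (Fin m × Fin 2 × Fin m × Fin 2 × Fin pa) :=
  (∑ k : Fin Nc, a k • ket (Fin.castLE hNrm j, (0 : Fin 2), Fin.castLE hNcm k, (0 : Fin 2), (0 : Fin pa)))
    + s • ket (Fin.castLE hNrm j, (0 : Fin 2), (0 : Fin m), (1 : Fin 2), (0 : Fin pa))

/-- The shape of `P |0, 0, k, 0, 0⟩`, with amplitudes `b` and slack amplitude `t`. -/
noncomputable def columnState (b : Fin Nr → ℂ) (t : ℂ) (k : Fin Nc) :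
    EuclideanSpace ℂ (Fin m × Fin 2 × Fin m × Fin 2 × Fin pa) :=
  (∑ j : Fin Nr, b j • ket (Fin.castLE hNrm j, (0 : Fin 2), Fin.castLE hNcm k, (0 : Fin 2), (0 : Fin pa)))
    + t • ket ((0 : Fin m), (1 : Fin 2), Fin.castLE hNcm k, (0 : Fin 2), (0 : Fin pa))

variable {hNrm hNcm}

lemma inner_rowState_columnState (a : Fin Nc → ℂ) (s : ℂ) (b : Fin Nr → ℂ) (t : ℂ)
    (j : Fin Nr) (k : Fin Nc) :
    ⟪rowState (pa := pa) hNrm hNcm a s j, columnState hNrm hNcm b t k⟫_ℂ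
      = starRingEnd ℂ (a k) * b j := by
  simp [rowState, columnState, inner_ket_ket, ite_and, Finset.sum_ite_irrel, mul_comm]

lemma inner_rowState_ket_of_le (a : Fin Nc → ℂ) (s : ℂ) (j : Fin Nr) {k : Fin m}
    (hk : Nc ≤ k) (x : Fin pa) :
    ⟪rowState hNrm hNcm a s j, ket ((0 : Fin m), (0 : Fin 2), k, (0 : Fin 2), x)⟫_ℂ = 0 := by
  have hne : ∀ k' : Fin Nc, Fin.castLE hNcm k' ≠ k := fun k' h => by
    have := k'.isLt; rw [← h] at hk; simp at hk; omega
  simp [rowState, inner_ket_ket, hne]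

lemma inner_ket_columnState_of_le {j : Fin m} (hj : Nr ≤ j) (x : Fin pa) (b : Fin Nr → ℂ)
    (t : ℂ) (k : Fin Nc) :
    ⟪ket (j, (0 : Fin 2), (0 : Fin m), (0 : Fin 2), x), columnState hNrm hNcm b t k⟫_ℂ = 0 := by
  have hne : ∀ j' : Fin Nr, j ≠ Fin.castLE hNrm j' := fun j' h => by
    have := j'.isLt; rw [h] at hj; simp at hj; omega
  simp [columnState, inner_ket_ket, hne]

end OracleStates

theorem stmt19_general (Nr Nc m pa : ℕ)
    [NeZero m] [NeZero pa]
    (hNr1 : 1 ≤ Nr) (hNrm : Nr ≤ m) (hNcm : Nc ≤ m)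
    (A : Matrix (Fin Nr) (Fin Nc) ℂ)
    (cmax rmax : ℝ)
    (hcpos : 0 < cmax) (hrpos : 0 < rmax)
    (A' : Matrix (Fin m) (Fin m) ℂ)
    (hA' : ∀ j k : Fin m, A' j k =
      if hj : j.val < Nr then
        (if hk : k.val < Nc then A ⟨j.val, hj⟩ ⟨k.val, hk⟩ else 0)
      else 0)
    (P Q S : EuclideanSpace ℂ (Fin m × Fin 2 × Fin m × Fin 2 × Fin pa) ≃ₗᵢ[ℂ]
      EuclideanSpace ℂ (Fin m × Fin 2 × Fin m × Fin 2 × Fin pa))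
    (hS : ∀ (x : EuclideanSpace ℂ (Fin m × Fin 2 × Fin m × Fin 2 × Fin pa))
      (j k : Fin m) (s t : Fin 2) (a : Fin pa),
      S x (j, s, k, t, a) = x (k, s, j, t, a))
    (hP1 : ∀ k : Fin Nc,
      P (ket ((0 : Fin m), (0 : Fin 2), Fin.castLE hNcm k, (0 : Fin 2), (0 : Fin pa))) =
        (∑ j : Fin Nr, ((A j k / (‖A j k‖ : ℂ)) * ((Real.sqrt (‖A j k‖ / cmax) : ℝ) : ℂ)) •
            ket (Fin.castLE hNrm j, (0 : Fin 2), Fin.castLE hNcm k, (0 : Fin 2), (0 : Fin pa)))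
        + ((Real.sqrt (1 - (∑ j, ‖A j k‖) / cmax) : ℝ) : ℂ) •
            ket ((0 : Fin m), (1 : Fin 2), Fin.castLE hNcm k, (0 : Fin 2), (0 : Fin pa)))
    (hP2 : ∀ k : Fin m, Nc ≤ k.val →
      P (ket ((0 : Fin m), (0 : Fin 2), k, (0 : Fin 2), (0 : Fin pa))) =
        ket ((0 : Fin m), (0 : Fin 2), k, (0 : Fin 2), (1 : Fin pa)))
    (hQ1 : ∀ j : Fin Nr,
      Q (ket (Fin.castLE hNrm j, (0 : Fin 2), (0 : Fin m), (0 : Fin 2), (0 : Fin pa))) =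
        (∑ k : Fin Nc, ((Real.sqrt (‖A j k‖ / rmax) : ℝ) : ℂ) •
            ket (Fin.castLE hNrm j, (0 : Fin 2), Fin.castLE hNcm k, (0 : Fin 2), (0 : Fin pa)))
        + ((Real.sqrt (1 - (∑ k, ‖A j k‖) / rmax) : ℝ) : ℂ) •
            ket (Fin.castLE hNrm j, (0 : Fin 2), (0 : Fin m), (1 : Fin 2), (0 : Fin pa)))
    (hQ2 : ∀ j : Fin m, Nr ≤ j.val →
      Q (ket (j, (0 : Fin 2), (0 : Fin m), (0 : Fin 2), (0 : Fin pa))) =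
        ket (j, (0 : Fin 2), (0 : Fin m), (0 : Fin 2), (1 : Fin pa))) :
    ∀ j k : Fin m,
      ⟪ket ((0 : Fin m), (0 : Fin 2), j, (0 : Fin 2), (0 : Fin pa)),
        S (Q.symm (P (ket ((0 : Fin m), (0 : Fin 2), k, (0 : Fin 2), (0 : Fin pa)))))⟫_ℂ
        = A' j k / ((Real.sqrt (rmax * cmax) : ℝ) : ℂ) := by
  intro j k
  rw [inner_ket_swap_symm hS, hA']
  rcases lt_or_ge j.val Nr with hj | hj
  · obtain ⟨j, rfl⟩ : ∃ j' : Fin Nr, Fin.castLE hNrm j' = j := ⟨⟨j, hj⟩, rfl⟩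
    rw [hQ1, dif_pos hj]
    rcases lt_or_ge k.val Nc with hk | hk
    · obtain ⟨k, rfl⟩ : ∃ k' : Fin Nc, Fin.castLE hNcm k' = k := ⟨⟨k, hk⟩, rfl⟩
      rw [hP1, dif_pos hk]
      refine (inner_rowState_columnState _ _ _ _ j k).trans ?_
      rw [Complex.conj_ofReal]
      exact ofReal_sqrt_mul_sgn_mul_sqrt _ hrpos hcpos
    · rw [hP2 k hk, dif_neg (not_lt.2 hk), zero_div]
      exact inner_rowState_ket_of_le _ _ j hk _
  · rw [hQ2 j hj, dif_neg (not_lt.2 hj), zero_div]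
    rcases lt_or_ge k.val Nc with hk | hk
    · obtain ⟨k, rfl⟩ : ∃ k' : Fin Nc, Fin.castLE hNcm k' = k := ⟨⟨k, hk⟩, rfl⟩
      rw [hP1]
      exact inner_ket_columnState_of_le hj _ _ _ k
    · have hj0 : j ≠ 0 := fun h => by rw [h] at hj; simp at hj; omega
      rw [hP2 k hk, inner_ket_ket, if_neg (by simp [hj0])]

/-- **Correctness of the row/column-oracle block encoding (Lemma 47 of Gilyén et al.).**
The Hilbert space is `H = H_r ⊗ H_rslack ⊗ H_c ⊗ H_cslack ⊗ H_anc`, realized as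
`EuclideanSpace ℂ (Fin m × Fin 2 × Fin m × Fin 2 × Fin pa)` with `m = 2^b`,
`pa = 2^q`; `ket (j, s, k, t, a)` is the product basis vector
`e_j ⊗ e_s ⊗ e_k ⊗ e_t ⊗ e_a`, and `S` is the unitary `SWAP_{r,c}` exchanging the `r`
and `c` factors.  Given the "column oracle" `P` and "row oracle" `Q` (unitaries acting
on the relevant basis vectors as displayed, with `sgn(z) = z/|z|`, `sgn 0 = 0`,
`c_k = Σ_j |A_{jk}|`, `r_j = Σ_k |A_{jk}|`, `c_max = max_k c_k > 0`,
`r_max = max_j r_j > 0`), the unitary `U = SWAP_{r,c} ∘ Q† ∘ P` satisfies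
`⟨e_0⊗e_0⊗e_j⊗e_0⊗e_0, U (e_0⊗e_0⊗e_k⊗e_0⊗e_0)⟩ = A'_{jk}/√(r_max·c_max)` for all
`j, k`, where `A'` is the top-left zero embedding of `A` into `ℂ^{m×m}`; that is, `U`
is a `(√(r_max·c_max), q+b+2, 0)`-block encoding of `A'`. -/
theorem stmt19 (b q Nr Nc m pa : ℕ)
    (hb : 1 ≤ b) (hq : 1 ≤ q) (hm : m = 2 ^ b) (hpa : pa = 2 ^ q)
    [NeZero m] [NeZero pa]
    (hNr1 : 1 ≤ Nr) (hNrm : Nr ≤ m) (hNc1 : 1 ≤ Nc) (hNcm : Nc ≤ m)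
    (A : Matrix (Fin Nr) (Fin Nc) ℂ) (hA : A ≠ 0)
    (cmax rmax : ℝ)
    (hcmax : IsGreatest (Set.range fun k : Fin Nc => ∑ j, ‖A j k‖) cmax)
    (hrmax : IsGreatest (Set.range fun j : Fin Nr => ∑ k, ‖A j k‖) rmax)
    (hcpos : 0 < cmax) (hrpos : 0 < rmax)
    (A' : Matrix (Fin m) (Fin m) ℂ)
    (hA' : ∀ j k : Fin m, A' j k =
      if hj : j.val < Nr then
        (if hk : k.val < Nc then A ⟨j.val, hj⟩ ⟨k.val, hk⟩ else 0)
      else 0)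
    (P Q S : EuclideanSpace ℂ (Fin m × Fin 2 × Fin m × Fin 2 × Fin pa) ≃ₗᵢ[ℂ]
      EuclideanSpace ℂ (Fin m × Fin 2 × Fin m × Fin 2 × Fin pa))
    (hS : ∀ (x : EuclideanSpace ℂ (Fin m × Fin 2 × Fin m × Fin 2 × Fin pa))
      (j k : Fin m) (s t : Fin 2) (a : Fin pa),
      S x (j, s, k, t, a) = x (k, s, j, t, a))
    (hP1 : ∀ k : Fin Nc,
      P (ket ((0 : Fin m), (0 : Fin 2), Fin.castLE hNcm k, (0 : Fin 2), (0 : Fin pa))) =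
        (∑ j : Fin Nr, ((A j k / (‖A j k‖ : ℂ)) * ((Real.sqrt (‖A j k‖ / cmax) : ℝ) : ℂ)) •
            ket (Fin.castLE hNrm j, (0 : Fin 2), Fin.castLE hNcm k, (0 : Fin 2), (0 : Fin pa)))
        + ((Real.sqrt (1 - (∑ j, ‖A j k‖) / cmax) : ℝ) : ℂ) •
            ket ((0 : Fin m), (1 : Fin 2), Fin.castLE hNcm k, (0 : Fin 2), (0 : Fin pa)))
    (hP2 : ∀ k : Fin m, Nc ≤ k.val →
      P (ket ((0 : Fin m), (0 : Fin 2), k, (0 : Fin 2), (0 : Fin pa))) =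
        ket ((0 : Fin m), (0 : Fin 2), k, (0 : Fin 2), (1 : Fin pa)))
    (hQ1 : ∀ j : Fin Nr,
      Q (ket (Fin.castLE hNrm j, (0 : Fin 2), (0 : Fin m), (0 : Fin 2), (0 : Fin pa))) =
        (∑ k : Fin Nc, ((Real.sqrt (‖A j k‖ / rmax) : ℝ) : ℂ) •
            ket (Fin.castLE hNrm j, (0 : Fin 2), Fin.castLE hNcm k, (0 : Fin 2), (0 : Fin pa)))
        + ((Real.sqrt (1 - (∑ k, ‖A j k‖) / rmax) : ℝ) : ℂ) •
            ket (Fin.castLE hNrm j, (0 : Fin 2), (0 : Fin m), (1 : Fin 2), (0 : Fin pa)))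
    (hQ2 : ∀ j : Fin m, Nr ≤ j.val →
      Q (ket (j, (0 : Fin 2), (0 : Fin m), (0 : Fin 2), (0 : Fin pa))) =
        ket (j, (0 : Fin 2), (0 : Fin m), (0 : Fin 2), (1 : Fin pa))) :
    ∀ j k : Fin m,
      ⟪ket ((0 : Fin m), (0 : Fin 2), j, (0 : Fin 2), (0 : Fin pa)),
        S (Q.symm (P (ket ((0 : Fin m), (0 : Fin 2), k, (0 : Fin 2), (0 : Fin pa)))))⟫_ℂ
        = A' j k / ((Real.sqrt (rmax * cmax) : ℝ) : ℂ) :=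
  stmt19_general Nr Nc m pa hNr1 hNrm hNcm A cmax rmax hcpos hrpos A' hA' P Q S hS hP1 hP2 hQ1 hQ2
end
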